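/- arXiv:1512.08162 — 2 statements merged into one kernel-verified Lean document; each statement's English description precedes it below -/
import Mathlib

section
/- Let S₀, S₁, …, Sₙ be bounded operators on a complex Hilbert space H and let V be the unilateral forward shift on ℓ²(ℕ). Then ‖Σ_{k=0}^{n} Sₖ‖ ≤ ‖Σ_{k=0}^{n} Sₖ ⊗ V^k‖, where Sₖ ⊗ V^k acts on the Hilbert space tensor product H ⊗ ℓ²(ℕ). -/
/-!
Feed `T` the vector `f_M` equal to `x` in the first `M` coordinates and `0` afterwards. On the
coordinates `N ≤ n < M` the convolution `T f_M` equals `(∑ k, S k) x`, so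
`(M - N) ‖(∑ k, S k) x‖² ≤ ‖T f_M‖² ≤ M ‖T‖² ‖x‖²`; dividing by `M` and letting `M → ∞` gives
`‖(∑ k, S k) x‖ ≤ ‖T‖ ‖x‖`.
-/

open Finset

theorem le_of_forall_nat_sub_mul_le {α : Type*} [Field α] [LinearOrder α] [IsStrictOrderedRing α]
    [Archimedean α] {a b c : α} (h : ∀ M : ℕ, (M - c) * a ≤ M * b) : a ≤ b := by
  by_contra! hba
  obtain ⟨M, hM⟩ := exists_nat_gt (c * a / (a - b))
  rw [div_lt_iff₀ (sub_pos.mpr hba)] at hM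
  linarith [h M]

namespace lp

theorem coeFn_sum_single_apply {α : Type*} {E : α → Type*} [∀ i, NormedAddCommGroup (E i)]
    [DecidableEq α] (p : ENNReal) (s : Finset α) (f : ∀ i, E i) (j : α) :
    (∑ i ∈ s, lp.single p i (f i)) j = if j ∈ s then f j else 0 := by
  simp only [coeFn_sum, lp.coeFn_single, Finset.sum_apply, Finset.sum_pi_single]

variable {𝕜 E : Type*} [NontriviallyNormedField 𝕜] [NormedAddCommGroup E] [NormedSpace 𝕜 E]
  {p : ENNReal} [Fact (1 ≤ p)]

theorem norm_le_opNorm_mul_of_apply_sum_single_eq (hp : 0 < p.toReal)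
    (T : lp (fun _ : ℕ => E) p →L[𝕜] lp (fun _ : ℕ => E) p) {x y : E} {N : ℕ}
    (hy : ∀ M n, N ≤ n → n < M → T (∑ i ∈ range M, lp.single p i x) n = y) :
    ‖y‖ ≤ ‖T‖ * ‖x‖ := by
  set q := p.toReal
  have hxy : ‖y‖ ^ q ≤ ‖T‖ ^ q * ‖x‖ ^ q := by
    refine le_of_forall_nat_sub_mul_le (c := (N : ℝ)) fun M => ?_
    set f := ∑ i ∈ range M, lp.single p i x
    have hf : ‖f‖ ^ q = M * ‖x‖ ^ q := by
      simpa using lp.norm_sum_single hp (fun _ => x) (range M)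
    calc ((M : ℝ) - N) * ‖y‖ ^ q
        ≤ ∑ n ∈ Ico N M, ‖T f n‖ ^ q := by
          rw [sum_congr rfl fun n hn => by rw [hy M n (mem_Ico.1 hn).1 (mem_Ico.1 hn).2],
            sum_const, Nat.card_Ico, nsmul_eq_mul]
          gcongr
          rw [sub_le_iff_le_add]; exact_mod_cast le_tsub_add
      _ ≤ ‖T f‖ ^ q := lp.sum_rpow_le_norm_rpow hp _ _
      _ ≤ (‖T‖ * ‖f‖) ^ q := by gcongr; exact T.le_opNorm f
      _ = M * (‖T‖ ^ q * ‖x‖ ^ q) := by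
          rw [Real.mul_rpow (norm_nonneg _) (norm_nonneg _), hf]; ring
  rwa [← Real.mul_rpow (norm_nonneg _) (norm_nonneg _),
    Real.rpow_le_rpow_iff (norm_nonneg _) (by positivity) hp] at hxy

end lp

theorem stmt_2_general {H : Type*} [NormedAddCommGroup H] [InnerProductSpace ℂ H]
    (N : ℕ) (S : ℕ → (H →L[ℂ] H))
    (T : lp (fun _ : ℕ => H) 2 →L[ℂ] lp (fun _ : ℕ => H) 2)
    (hT : ∀ (f : lp (fun _ : ℕ => H) 2) (n : ℕ),
      (T f : ∀ _ : ℕ, H) n =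
        ∑ k ∈ Finset.range (N + 1), if k ≤ n then S k ((f : ∀ _ : ℕ, H) (n - k)) else 0) :
    ‖∑ k ∈ Finset.range (N + 1), S k‖ ≤ ‖T‖ := by
  refine ContinuousLinearMap.opNorm_le_bound _ (norm_nonneg T) fun x => ?_
  refine lp.norm_le_opNorm_mul_of_apply_sum_single_eq (by norm_num) T (N := N) fun M n hNn hnM => ?_
  rw [hT, _root_.sum_apply]
  refine sum_congr rfl fun k hk => ?_
  have hkn : k ≤ n := (Nat.lt_succ_iff.mp (mem_range.mp hk)).trans hNn
  rw [if_pos hkn, lp.coeFn_sum_single_apply 2 _ (fun _ => x), if_pos (mem_range.2 (by omega))]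

/-- If `T` is the operator `Σ_{k=0}^{N} Sₖ ⊗ V^k` on `H ⊗ ℓ²(ℕ) ≅ ℓ²(ℕ, H)`,
where `V` is the unilateral forward shift, i.e. `(T f)(n) = Σ_{k ≤ n, k ≤ N} Sₖ (f (n - k))`,
then `‖Σ_{k=0}^{N} Sₖ‖ ≤ ‖T‖`. -/
theorem stmt_2 {H : Type*} [NormedAddCommGroup H] [InnerProductSpace ℂ H]
    [CompleteSpace H] (N : ℕ) (S : ℕ → (H →L[ℂ] H))
    (T : lp (fun _ : ℕ => H) 2 →L[ℂ] lp (fun _ : ℕ => H) 2)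
    (hT : ∀ (f : lp (fun _ : ℕ => H) 2) (n : ℕ),
      (T f : ∀ _ : ℕ, H) n =
        ∑ k ∈ Finset.range (N + 1), if k ≤ n then S k ((f : ∀ _ : ℕ, H) (n - k)) else 0) :
    ‖∑ k ∈ Finset.range (N + 1), S k‖ ≤ ‖T‖ :=
  stmt_2_general N S T hT
end

section
/- Let S₀, S₁, …, Sₙ be bounded operators on a complex Hilbert space H, let U be the bilateral shift on ℓ²(ℤ) and V the unilateral forward shift on ℓ²(ℕ). Then ‖Σ_{k=0}^{n} Sₖ ⊗ U^k‖ = ‖Σ_{k=0}^{n} Sₖ ⊗ V^k‖. -/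
open Function
open scoped ENNReal

section aux

variable {H : Type*} [NormedAddCommGroup H]

private lemma shift_inj (m : ℤ) : Function.Injective (fun k : ℕ => m + (k : ℤ)) := by
  intro a b h
  simpa using h

/-- tsum over ℕ of a shifted ℤ-indexed family that vanishes below `m`. -/
private lemma aux_tsum (m : ℤ) (v : ℤ → ℝ) (hv : ∀ n < m, v n = 0) :
    ∑' k : ℕ, v (m + k) = ∑' n : ℤ, v n := by
  refine Function.Injective.tsum_eq (shift_inj m) ?_
  intro n hn
  have hmn : m ≤ n := by
    by_contra hlt
    exact hn (hv n (lt_of_not_ge hlt))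
  exact ⟨(n - m).toNat, by simp; omega⟩

private lemma aux_summable (m : ℤ) (F : lp (fun _ : ℤ => H) 2) :
    Summable fun k : ℕ => ‖(F : ∀ _ : ℤ, H) (m + k)‖ ^ (2 : ℝ≥0∞).toReal := by
  have h := (memℓp_gen_iff (by norm_num : 0 < (2 : ℝ≥0∞).toReal)).mp (lp.memℓp F)
  exact h.comp_injective (shift_inj m)

private lemma aux_norm (m : ℤ) (F : lp (fun _ : ℤ => H) 2) (g : lp (fun _ : ℕ => H) 2)
    (hg : ∀ k : ℕ, (g : ∀ _ : ℕ, H) k = (F : ∀ _ : ℤ, H) (m + k))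
    (hF : ∀ n < m, (F : ∀ _ : ℤ, H) n = 0) : ‖g‖ = ‖F‖ := by
  have hp : 0 < (2 : ℝ≥0∞).toReal := by norm_num
  rw [lp.norm_eq_tsum_rpow hp, lp.norm_eq_tsum_rpow hp]
  congr 1
  calc ∑' k : ℕ, ‖(g : ∀ _ : ℕ, H) k‖ ^ (2 : ℝ≥0∞).toReal
      = ∑' k : ℕ, ‖(F : ∀ _ : ℤ, H) (m + k)‖ ^ (2 : ℝ≥0∞).toReal := by
        simp only [hg]
    _ = ∑' n : ℤ, ‖(F : ∀ _ : ℤ, H) n‖ ^ (2 : ℝ≥0∞).toReal := by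
        refine aux_tsum m (fun n => ‖(F : ∀ _ : ℤ, H) n‖ ^ (2 : ℝ≥0∞).toReal) fun n hn => ?_
        simp only [hF n hn, norm_zero]
        exact Real.zero_rpow (by norm_num)

end aux

/-- If `TU` is the operator `Σ_{k=0}^{N} Sₖ ⊗ U^k` on `H ⊗ ℓ²(ℤ) ≅ ℓ²(ℤ, H)`
(`U` the bilateral shift) and `TV` is `Σ_{k=0}^{N} Sₖ ⊗ V^k` on `H ⊗ ℓ²(ℕ) ≅ ℓ²(ℕ, H)`
(`V` the unilateral forward shift), then `‖TU‖ = ‖TV‖`. -/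
theorem stmt_3 {H : Type*} [NormedAddCommGroup H] [InnerProductSpace ℂ H]
    [CompleteSpace H] (N : ℕ) (S : ℕ → (H →L[ℂ] H))
    (TU : lp (fun _ : ℤ => H) 2 →L[ℂ] lp (fun _ : ℤ => H) 2)
    (hTU : ∀ (f : lp (fun _ : ℤ => H) 2) (n : ℤ),
      (TU f : ∀ _ : ℤ, H) n =
        ∑ k ∈ Finset.range (N + 1), S k ((f : ∀ _ : ℤ, H) (n - (k : ℤ))))
    (TV : lp (fun _ : ℕ => H) 2 →L[ℂ] lp (fun _ : ℕ => H) 2)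
    (hTV : ∀ (f : lp (fun _ : ℕ => H) 2) (n : ℕ),
      (TV f : ∀ _ : ℕ, H) n =
        ∑ k ∈ Finset.range (N + 1), if k ≤ n then S k ((f : ∀ _ : ℕ, H) (n - k)) else 0) :
    ‖TU‖ = ‖TV‖ := by
  refine le_antisymm ?_ ?_
  · -- ‖TU‖ ≤ ‖TV‖
    have key : ∀ F : lp (fun _ : ℤ => H) 2,
        (∃ m : ℤ, ∀ n < m, (F : ∀ _ : ℤ, H) n = 0) → ‖TU F‖ ≤ ‖TV‖ * ‖F‖ := by
      rintro F ⟨m, hm⟩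
      have hg0mem : Memℓp (fun k : ℕ => (F : ∀ _ : ℤ, H) (m - N + k)) 2 :=
        memℓp_gen (aux_summable (m - N) F)
      set g : lp (fun _ : ℕ => H) 2 := ⟨_, hg0mem⟩ with hgdef
      have hgc : ∀ k : ℕ, (g : ∀ _ : ℕ, H) k = (F : ∀ _ : ℤ, H) (m - N + k) := fun k => rfl
      have hnormg : ‖g‖ = ‖F‖ := aux_norm (m - N) F g hgc (fun n hn => hm n (by omega))
      have hcoord : ∀ n : ℕ, (TV g : ∀ _ : ℕ, H) n = (TU F : ∀ _ : ℤ, H) (m - N + n) := by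
        intro n
        rw [hTV, hTU]
        refine Finset.sum_congr rfl fun k hk => ?_
        by_cases hkn : k ≤ n
        · rw [if_pos hkn, hgc]
          have : (m - ↑N + ↑(n - k) : ℤ) = m - ↑N + ↑n - ↑k := by omega
          rw [this]
        · rw [if_neg hkn, hm (m - ↑N + ↑n - ↑k) (by omega), map_zero]
      have hvan : ∀ n < m - N, (TU F : ∀ _ : ℤ, H) n = 0 := by
        intro n hn
        rw [hTU]
        refine Finset.sum_eq_zero fun k hk => ?_
        rw [hm (n - k) (by omega), map_zero]
      calc ‖TU F‖ = ‖TV g‖ := (aux_norm (m - N) (TU F) (TV g) hcoord hvan).symm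
        _ ≤ ‖TV‖ * ‖g‖ := TV.le_opNorm g
        _ = ‖TV‖ * ‖F‖ := by rw [hnormg]
    have hall : ∀ F : lp (fun _ : ℤ => H) 2, ‖TU F‖ ≤ ‖TV‖ * ‖F‖ := by
      intro F
      have hs : IsClosed {G : lp (fun _ : ℤ => H) 2 | ‖TU G‖ ≤ ‖TV‖ * ‖G‖} :=
        isClosed_le (continuous_norm.comp TU.continuous) (continuous_const.mul continuous_norm)
      have htend := (lp.hasSum_single (by norm_num : (2 : ℝ≥0∞) ≠ ⊤) F)
      refine hs.mem_of_tendsto htend (Filter.Eventually.of_forall fun t => key _ ?_)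
      rcases t.eq_empty_or_nonempty with rfl | ht
      · exact ⟨0, fun n _ => by simp⟩
      · refine ⟨t.min' ht, fun n hn => ?_⟩
        rw [lp.coeFn_sum, Finset.sum_apply]
        refine Finset.sum_eq_zero fun i hi => ?_
        exact lp.single_apply_ne 2 i _ (by have := t.min'_le i hi; omega)
    exact TU.opNorm_le_bound (norm_nonneg TV) hall
  · -- ‖TV‖ ≤ ‖TU‖
    refine TV.opNorm_le_bound (norm_nonneg TU) fun f => ?_
    set F0 : ℤ → H := fun n => if h : 0 ≤ n then (f : ∀ _ : ℕ, H) n.toNat else 0 with hF0def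
    have hcomp : ∀ k : ℕ, F0 (0 + k) = (f : ∀ _ : ℕ, H) k := by
      intro k
      simp [hF0def]
    have hvan0 : ∀ n : ℤ, n < 0 → F0 n = 0 := by
      intro n hn
      simp [hF0def, not_le.mpr hn]
    have hmem : Memℓp F0 2 := by
      apply memℓp_gen
      have hsum : Summable fun k : ℕ => ‖(f : ∀ _ : ℕ, H) k‖ ^ (2 : ℝ≥0∞).toReal :=
        (memℓp_gen_iff (by norm_num : 0 < (2 : ℝ≥0∞).toReal)).mp (lp.memℓp f)
      refine ((shift_inj 0).summable_iff ?_).mp (hsum.congr fun k => by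
        simp only [Function.comp_apply]
        rw [hcomp k])
      intro n hn
      have hn0 : n < 0 := by
        by_contra h
        exact hn ⟨n.toNat, by simp; omega⟩
      simp only [hvan0 n hn0, norm_zero]
      exact Real.zero_rpow (by norm_num)
    set F : lp (fun _ : ℤ => H) 2 := ⟨F0, hmem⟩ with hFdef
    have hFc : ∀ k : ℕ, (f : ∀ _ : ℕ, H) k = (F : ∀ _ : ℤ, H) (0 + k) := fun k => (hcomp k).symm
    have hnormF : ‖f‖ = ‖F‖ := aux_norm 0 F f hFc hvan0
    have hcoord : ∀ n : ℕ, (TV f : ∀ _ : ℕ, H) n = (TU F : ∀ _ : ℤ, H) (0 + n) := by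
      intro n
      rw [hTV, hTU]
      refine Finset.sum_congr rfl fun k hk => ?_
      by_cases hkn : k ≤ n
      · rw [if_pos hkn]
        have : (F : ∀ _ : ℤ, H) (0 + ↑n - ↑k) = (f : ∀ _ : ℕ, H) (n - k) := by
          show F0 (0 + ↑n - ↑k) = _
          rw [hF0def]
          simp only [dif_pos (by omega : (0:ℤ) ≤ 0 + ↑n - ↑k)]
          have : ((0 : ℤ) + ↑n - ↑k).toNat = n - k := by omega
          rw [this]
        rw [this]
      · rw [if_neg hkn]
        have : (F : ∀ _ : ℤ, H) (0 + ↑n - ↑k) = 0 := hvan0 _ (by omega)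
        rw [this, map_zero]
    have hvan : ∀ n : ℤ, n < 0 → (TU F : ∀ _ : ℤ, H) n = 0 := by
      intro n hn
      rw [hTU]
      refine Finset.sum_eq_zero fun k hk => ?_
      have : (F : ∀ _ : ℤ, H) (n - k) = 0 := hvan0 _ (by omega)
      rw [this, map_zero]
    calc ‖TV f‖ = ‖TU F‖ := aux_norm 0 (TU F) (TV f) hcoord hvan
      _ ≤ ‖TU‖ * ‖F‖ := TU.le_opNorm F
      _ = ‖TU‖ * ‖f‖ := by rw [hnormF]
end
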